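/- arXiv:1207.6669 — 3 statements merged into one kernel-verified Lean document; each statement's English description precedes it below -/
import Mathlib

section
/- Let N be a positive integer, λ > 0, and let v ∈ C¹[0,1] be a continuous function satisfying the integral equation v(r) = λ ∫_r^1 (∫_0^s N τ^{N-1} F(v(τ)) dτ)^{1/N} ds on [0,1], where F : ℝ → ℝ is continuous and there exists L > 0 with |F(v(τ))| ≤ L |v(τ)|^N for all τ. If there exists r* ∈ [0,1] with v(r*) = 0 and v'(r*) = 0 such that v(r) = λ ∫_r^{r*} (∫_{r*}^s N τ^{N-1} F(v(τ)) dτ)^{1/N} ds for r ∈ [0, r*], then v ≡ 0 on [0, r*]. -/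
open Set intervalIntegral

/-- Uniqueness via Gronwall: a solution of the integral equation with a double
zero at `r*` vanishes identically on `[0, r*]`. -/
theorem stmt_7 (N : ℕ) (hN : 1 ≤ N) (lam : ℝ) (hlam : 0 < lam)
    (F : ℝ → ℝ) (hF : Continuous F) (L : ℝ) (hL : 0 < L)
    (hFbound : ∀ u : ℝ, |F u| ≤ L * |u| ^ N)
    (v v' : ℝ → ℝ) (hv : ∀ r, HasDerivAt v (v' r) r)
    (hv'c : ContinuousOn v' (Icc (0:ℝ) 1))
    (heq : ∀ r ∈ Icc (0:ℝ) 1,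
      v r = lam * ∫ s in r..(1:ℝ),
        (∫ τ in (0:ℝ)..s, (N:ℝ) * τ ^ (N - 1) * F (v τ)) ^ ((1:ℝ) / N))
    (rs : ℝ) (hrs : rs ∈ Icc (0:ℝ) 1)
    (hzero : v rs = 0) (hzero' : v' rs = 0)
    (heq' : ∀ r ∈ Icc (0:ℝ) rs,
      v r = lam * ∫ s in r..rs,
        (∫ τ in rs..s, (N:ℝ) * τ ^ (N - 1) * F (v τ)) ^ ((1:ℝ) / N)) :
    ∀ r ∈ Icc (0:ℝ) rs, v r = 0 := by
  have hrs0 : (0:ℝ) ≤ rs := hrs.1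
  have hrs1 : rs ≤ 1 := hrs.2
  have hvc : Continuous v := by
    rw [continuous_iff_continuousAt]; exact fun x => (hv x).continuousAt
  obtain ⟨B, hB⟩ := (isCompact_Icc : IsCompact (Icc (0:ℝ) rs)).exists_bound_of_continuousOn
    hvc.continuousOn
  have hB0 : (0:ℝ) ≤ B := le_trans (norm_nonneg _) (hB rs ⟨hrs0, le_refl rs⟩)
  have hNne : ((N:ℝ)) ≠ 0 := Nat.cast_ne_zero.mpr (by omega)
  have hN0 : (0:ℝ) < 1/N := by positivity
  have hNL : (0:ℝ) ≤ (N:ℝ) * L := by positivity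
  set c : ℝ := lam * ((N:ℝ) * L) ^ ((1:ℝ)/N) with hc
  have hc0 : (0:ℝ) ≤ c := by
    have := Real.rpow_nonneg hNL ((1:ℝ)/N); positivity
  have hhc : Continuous (fun τ => (N:ℝ) * τ ^ (N-1) * F (v τ)) := by continuity
  set g : ℝ → ℝ := fun s => ∫ τ in rs..s, (N:ℝ) * τ ^ (N-1) * F (v τ) with hg
  have hgc : Continuous g :=
    intervalIntegral.continuous_primitive (fun a b => hhc.intervalIntegrable a b) rs
  have hGc : Continuous (fun s => (g s) ^ ((1:ℝ)/N)) :=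
    (Real.continuous_rpow_const hN0.le).comp hgc
  have key : ∀ n : ℕ, ∀ r ∈ Icc (0:ℝ) rs,
      |v r| ≤ B * c^n * (rs - r)^n / n.factorial := by
    intro n
    induction n with
    | zero =>
      intro r hr
      simpa [Real.norm_eq_abs] using hB r hr
    | succ n ih =>
      intro r hr
      have hr0 : 0 ≤ r := hr.1
      have hrrs : r ≤ rs := hr.2
      -- pointwise bound for s in [r, rs]
      have hpt : ∀ s ∈ Icc r rs,
          |(g s) ^ ((1:ℝ)/N)| ≤
            (((N:ℝ)*L) ^ ((1:ℝ)/N) * (B * c^n / n.factorial)) * (rs - s)^n := by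
        intro s hs
        have hs0 : 0 ≤ s := le_trans hr0 hs.1
        have hsrs : s ≤ rs := hs.2
        set K : ℝ := B * c^n * (rs - s)^n / n.factorial with hK
        have hK0 : 0 ≤ K := by
          have : (0:ℝ) ≤ rs - s := by linarith
          positivity
        have hτbound : ∀ τ ∈ Icc s rs,
            |(N:ℝ) * τ ^ (N-1) * F (v τ)| ≤ (N:ℝ) * L * K^N := by
          intro τ hτ
          have hτ0 : 0 ≤ τ := le_trans hs0 hτ.1
          have hτ1 : τ ≤ 1 := le_trans hτ.2 hrs1
          have hvτ : |v τ| ≤ K := by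
            have h1 : |v τ| ≤ B * c^n * (rs - τ)^n / n.factorial :=
              ih τ ⟨le_trans hr0 (le_trans hs.1 hτ.1), hτ.2⟩
            have h2 : (rs - τ)^n ≤ (rs - s)^n :=
              pow_le_pow_left₀ (by linarith [hτ.2]) (by linarith [hτ.1]) n
            have h3 : B * c^n * (rs - τ)^n ≤ B * c^n * (rs - s)^n :=
              mul_le_mul_of_nonneg_left h2 (by positivity)
            have h4 := Nat.cast_pos (α := ℝ) |>.mpr (Nat.factorial_pos n)
            exact le_trans h1 ((div_le_div_iff_of_pos_right h4).mpr h3)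
          have hFb : |F (v τ)| ≤ L * K^N :=
            le_trans (hFbound (v τ))
              (mul_le_mul_of_nonneg_left
                (pow_le_pow_left₀ (abs_nonneg _) hvτ N) hL.le)
          have hpow : τ ^ (N-1) ≤ 1 := pow_le_one₀ hτ0 hτ1
          have hpow0 : (0:ℝ) ≤ τ ^ (N-1) := pow_nonneg hτ0 _
          calc |(N:ℝ) * τ ^ (N-1) * F (v τ)|
              = (N:ℝ) * τ ^ (N-1) * |F (v τ)| := by
                rw [abs_mul, abs_mul, abs_of_nonneg (by positivity : (0:ℝ) ≤ (N:ℝ)),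
                  abs_of_nonneg hpow0]
            _ ≤ (N:ℝ) * 1 * (L * K^N) :=
                mul_le_mul (mul_le_mul_of_nonneg_left hpow (Nat.cast_nonneg N)) hFb
                  (abs_nonneg _) (by positivity)
            _ = (N:ℝ) * L * K^N := by ring
        have hgb : |g s| ≤ ((N:ℝ) * L * (rs - s)) * K^N := by
          have h1 : |g s| = |∫ τ in s..rs, (N:ℝ) * τ ^ (N-1) * F (v τ)| := by
            rw [hg, intervalIntegral.integral_symm, abs_neg]
          rw [h1]
          calc |∫ τ in s..rs, (N:ℝ) * τ ^ (N-1) * F (v τ)|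
              ≤ ∫ τ in s..rs, |(N:ℝ) * τ ^ (N-1) * F (v τ)| :=
                intervalIntegral.abs_integral_le_integral_abs hsrs
            _ ≤ ∫ τ in s..rs, (N:ℝ) * L * K^N := by
                apply intervalIntegral.integral_mono_on hsrs
                · exact (hhc.abs).intervalIntegrable s rs
                · exact intervalIntegrable_const
                · exact hτbound
            _ = (rs - s) * ((N:ℝ) * L * K^N) := by
                rw [intervalIntegral.integral_const]; simp [smul_eq_mul]
            _ = ((N:ℝ) * L * (rs - s)) * K^N := by ring
        have hrs_s0 : (0:ℝ) ≤ rs - s := by linarith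
        have hKN : ((K^N : ℝ)) ^ ((1:ℝ)/N) = K := by
          rw [← Real.rpow_natCast K N, ← Real.rpow_mul hK0, mul_one_div,
            div_self hNne, Real.rpow_one]
        calc |(g s) ^ ((1:ℝ)/N)| ≤ |g s| ^ ((1:ℝ)/N) := Real.abs_rpow_le_abs_rpow _ _
          _ ≤ (((N:ℝ) * L * (rs - s)) * K^N) ^ ((1:ℝ)/N) :=
              Real.rpow_le_rpow (abs_nonneg _) hgb hN0.le
          _ = ((N:ℝ) * L * (rs - s)) ^ ((1:ℝ)/N) * (K^N) ^ ((1:ℝ)/N) :=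
              Real.mul_rpow (by positivity) (by positivity)
          _ ≤ ((N:ℝ) * L) ^ ((1:ℝ)/N) * K := by
              rw [hKN]
              exact mul_le_mul_of_nonneg_right
                (Real.rpow_le_rpow (by positivity)
                  (by nlinarith [hNL, hs0, hrs1]) hN0.le) hK0
          _ = (((N:ℝ)*L) ^ ((1:ℝ)/N) * (B * c^n / n.factorial)) * (rs - s)^n := by
              rw [hK]; ring
      -- integrate the pointwise bound
      have hint : ∫ s in r..rs, (rs - s)^n = (rs - r)^(n+1) / (n+1) := by
        have := intervalIntegral.integral_comp_sub_left (fun x : ℝ => x^n) rs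
          (a := r) (b := rs)
        rw [this, sub_self]
        rw [integral_pow]
        simp
      have habs : |v r| ≤ lam * ∫ s in r..rs,
          (((N:ℝ)*L) ^ ((1:ℝ)/N) * (B * c^n / n.factorial)) * (rs - s)^n := by
        rw [heq' r hr, abs_mul, abs_of_pos hlam]
        have h1 : |∫ s in r..rs, (g s) ^ ((1:ℝ)/N)| ≤
            ∫ s in r..rs, |(g s) ^ ((1:ℝ)/N)| :=
          intervalIntegral.abs_integral_le_integral_abs hrrs
        have h2 : (∫ s in r..rs, |(g s) ^ ((1:ℝ)/N)|) ≤
            ∫ s in r..rs, (((N:ℝ)*L) ^ ((1:ℝ)/N) * (B * c^n / n.factorial)) * (rs - s)^n := by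
          apply intervalIntegral.integral_mono_on hrrs
          · exact (hGc.abs).intervalIntegrable r rs
          · exact ((continuous_const.mul
              ((continuous_const.sub continuous_id).pow n)).intervalIntegrable r rs)
          · exact hpt
        have := le_trans h1 h2
        exact mul_le_mul_of_nonneg_left this hlam.le
      have hintc : ∫ s in r..rs,
          (((N:ℝ)*L) ^ ((1:ℝ)/N) * (B * c^n / n.factorial)) * (rs - s)^n
          = (((N:ℝ)*L) ^ ((1:ℝ)/N) * (B * c^n / n.factorial)) * ((rs - r)^(n+1) / (n+1)) := by
        rw [intervalIntegral.integral_const_mul, hint]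
      rw [hintc] at habs
      refine le_trans habs (le_of_eq ?_)
      rw [Nat.factorial_succ]
      push_cast
      field_simp [hc]
      ring
  intro r hr
  have hb : ∀ n : ℕ, |v r| ≤ B * (c * rs)^n / n.factorial := by
    intro n
    calc |v r| ≤ B * c^n * (rs - r)^n / n.factorial := key n r hr
      _ ≤ B * (c * rs)^n / n.factorial := by
          have h2 : (rs - r)^n ≤ rs^n :=
            pow_le_pow_left₀ (by linarith [hr.2, hr.1]) (by linarith [hr.1]) n
          have h4 := Nat.cast_pos (α := ℝ) |>.mpr (Nat.factorial_pos n)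
          have h5 : B * c^n * (rs - r)^n ≤ B * c^n * rs^n :=
            mul_le_mul_of_nonneg_left h2 (by positivity)
          have h6 : B * (c * rs)^n = B * c^n * rs^n := by rw [mul_pow]; ring
          rw [h6]
          exact (div_le_div_iff_of_pos_right h4).mpr h5
  have hlim : Filter.Tendsto (fun n : ℕ => B * (c * rs)^n / n.factorial)
      Filter.atTop (nhds 0) := by
    have h1 := (Real.summable_pow_div_factorial (c * rs)).tendsto_atTop_zero
    have h2 := h1.const_mul B
    simpa [mul_div_assoc] using h2
  have : |v r| ≤ 0 := le_of_tendsto_of_tendsto' tendsto_const_nhds hlim hb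
  exact abs_nonpos_iff.mp this
end

section
/- Let p ≥ 2 and define, for v in the Sobolev space W^{1,p}(0,1) with v(1) = 0, f₁(v) = (1/p)∫₀¹ |v'(r)|^p dr and f₂(v) = ((p-1)/p)∫₀¹ r^{p-2} |v(r)|^p dr. Then for every such v with v ≢ 0, f₁(v)/f₂(v) ≥ 1/(p-1); equivalently, (p-1)²∫₀¹ r^{p-2}|v|^p dr ≤ (p-1)∫₀¹ |v'|^p dr. -/
/-!
Since `v 1 = 0`, the fundamental theorem of calculus bounds `|v r|` on `[0, 1]` by
`C = ∫₀¹ |v'|`, and Jensen's inequality for the convex map `x ↦ x ^ p` gives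
`C ^ p ≤ ∫₀¹ |v'| ^ p`. The weight integrates to `∫₀¹ r ^ (p - 2) = 1 / (p - 1)`, so
`∫₀¹ r ^ (p - 2) |v| ^ p ≤ C ^ p / (p - 1)`.
-/

open Set MeasureTheory intervalIntegral

theorem abs_le_integral_abs_deriv_of_right_eq_zero {v v' : ℝ → ℝ} {a b r : ℝ}
    (hv : ∀ x, HasDerivAt v (v' x) x) (hv' : IntervalIntegrable v' volume a b) (hb : v b = 0)
    (hr : r ∈ Icc a b) : |v r| ≤ ∫ x in a..b, |v' x| := by
  have hv'rb : IntervalIntegrable v' volume r b :=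
    hv'.mono_set (uIcc_subset_uIcc_right (mem_uIcc_of_le hr.1 hr.2))
  have hftc : ∫ x in r..b, v' x = -v r := by
    rw [integral_eq_sub_of_hasDerivAt (fun x _ => hv x) hv'rb, hb, zero_sub]
  calc |v r| = |∫ x in r..b, v' x| := by rw [hftc, abs_neg]
    _ ≤ ∫ x in r..b, |v' x| := abs_integral_le_integral_abs hr.2
    _ ≤ ∫ x in a..b, |v' x| :=
      integral_mono_interval hr.1 hr.2 le_rfl
        (Filter.Eventually.of_forall fun x => abs_nonneg _) hv'.abs

theorem rpow_integral_le_integral_rpow {α : Type*} [MeasurableSpace α] {μ : Measure α}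
    [IsProbabilityMeasure μ] {f : α → ℝ} {p : ℝ} (hp : 1 ≤ p) (hf_nonneg : 0 ≤ᵐ[μ] f)
    (hf : Integrable f μ) (hfp : Integrable (fun x => f x ^ p) μ) :
    (∫ x, f x ∂μ) ^ p ≤ ∫ x, f x ^ p ∂μ :=
  (convexOn_rpow hp).map_integral_le
    (continuousOn_id.rpow_const fun _ _ => Or.inr (zero_le_one.trans hp)) isClosed_Ici
    hf_nonneg hf hfp

theorem rpow_integral_abs_le_integral_abs_rpow {g : ℝ → ℝ} {p : ℝ} (hp : 1 ≤ p)
    (hg : ContinuousOn g (Icc 0 1)) :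
    (∫ x in (0:ℝ)..1, |g x|) ^ p ≤ ∫ x in (0:ℝ)..1, |g x| ^ p := by
  have : IsProbabilityMeasure (volume.restrict (Ioc (0:ℝ) 1)) := ⟨by simp⟩
  have hgp : ContinuousOn (fun x => |g x| ^ p) (Icc 0 1) :=
    hg.abs.rpow_const fun _ _ => Or.inr (zero_le_one.trans hp)
  simp only [integral_of_le zero_le_one]
  exact rpow_integral_le_integral_rpow hp (Filter.Eventually.of_forall fun x => abs_nonneg _)
    (hg.abs.intervalIntegrable_of_Icc zero_le_one).1 (hgp.intervalIntegrable_of_Icc zero_le_one).1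

theorem integral_rpow_sub_two_mul_abs_rpow_le {g : ℝ → ℝ} {p C : ℝ} (hp : 1 < p)
    (hg : ContinuousOn g (Icc 0 1)) (hC : ∀ r ∈ Icc (0:ℝ) 1, |g r| ≤ C) :
    ∫ r in (0:ℝ)..1, r ^ (p - 2) * |g r| ^ p ≤ C ^ p / (p - 1) := by
  have hp0 : 0 ≤ p := by linarith
  have hweight : IntervalIntegrable (fun r : ℝ => r ^ (p - 2)) volume 0 1 :=
    intervalIntegrable_rpow' (by linarith)
  have hweight_integral : ∫ r in (0:ℝ)..1, r ^ (p - 2) = 1 / (p - 1) := by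
    rw [integral_rpow (Or.inl (by linarith)), Real.one_rpow,
      Real.zero_rpow (by linarith : p - 2 + 1 ≠ 0)]
    ring_nf
  calc ∫ r in (0:ℝ)..1, r ^ (p - 2) * |g r| ^ p
      ≤ ∫ r in (0:ℝ)..1, r ^ (p - 2) * C ^ p := by
        refine integral_mono_on zero_le_one ?_ (hweight.mul_const _) fun x hx => ?_
        · refine hweight.mul_continuousOn ?_
          rw [uIcc_of_le zero_le_one]
          exact hg.abs.rpow_const fun _ _ => Or.inr hp0
        · exact mul_le_mul_of_nonneg_left (Real.rpow_le_rpow (abs_nonneg _) (hC x hx) hp0)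
            (Real.rpow_nonneg hx.1 _)
    _ = C ^ p / (p - 1) := by rw [intervalIntegral.integral_mul_const, hweight_integral]; ring

theorem stmt_9_general (p : ℝ) (hp : 2 ≤ p)
    (v v' : ℝ → ℝ) (hv : ∀ r, HasDerivAt v (v' r) r)
    (hv'c : ContinuousOn v' (Icc (0:ℝ) 1))
    (hbc : v 1 = 0) :
    (p - 1) ^ 2 * ∫ r in (0:ℝ)..1, r ^ (p - 2) * |v r| ^ p ≤
      (p - 1) * ∫ r in (0:ℝ)..1, |v' r| ^ p := by
  have hp1 : 1 < p := by linarith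
  have hv_cont : Continuous v := continuous_iff_continuousAt.mpr fun r => (hv r).continuousAt
  have hbound (r : ℝ) (hr : r ∈ Icc (0:ℝ) 1) : |v r| ≤ ∫ x in (0:ℝ)..1, |v' x| :=
    abs_le_integral_abs_deriv_of_right_eq_zero hv (hv'c.intervalIntegrable_of_Icc zero_le_one)
      hbc hr
  calc (p - 1) ^ 2 * ∫ r in (0:ℝ)..1, r ^ (p - 2) * |v r| ^ p
      ≤ (p - 1) ^ 2 * ((∫ x in (0:ℝ)..1, |v' x|) ^ p / (p - 1)) := by
        gcongr
        exact integral_rpow_sub_two_mul_abs_rpow_le hp1 hv_cont.continuousOn hbound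
    _ = (p - 1) * (∫ x in (0:ℝ)..1, |v' x|) ^ p := by field_simp
    _ ≤ (p - 1) * ∫ r in (0:ℝ)..1, |v' r| ^ p := by
        gcongr
        exact rpow_integral_abs_le_integral_abs_rpow hp1.le hv'c

/-- Poincaré-type inequality: for `v` with `v(1)=0`,
`(p-1)² ∫₀¹ r^{p-2}|v|^p ≤ (p-1) ∫₀¹ |v'|^p`, i.e. `f₁(v)/f₂(v) ≥ 1/(p-1)`. -/
theorem stmt_9 (p : ℝ) (hp : 2 ≤ p)
    (v v' : ℝ → ℝ) (hv : ∀ r, HasDerivAt v (v' r) r)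
    (hv'c : ContinuousOn v' (Icc (0:ℝ) 1))
    (hbc : v 1 = 0)
    (hne : ∃ r ∈ Icc (0:ℝ) 1, v r ≠ 0) :
    (p - 1) ^ 2 * ∫ r in (0:ℝ)..1, r ^ (p - 2) * |v r| ^ p ≤
      (p - 1) * ∫ r in (0:ℝ)..1, |v' r| ^ p :=
  stmt_9_general p hp v v' hv hv'c hbc
end

section
/- Let N ≥ 1 and suppose v satisfies the fixed point equation v = λ T_f v with T_f v(r) = ∫_r^1 (∫_0^s N τ^{N-1} f(v(τ)) dτ)^{1/N} ds, where f is continuous and |f(s)| ≤ M |s|^N for all s ≠ 0 with some M > 0. If v ≢ 0 then ‖v‖_∞ ≤ M^{1/N} λ ‖v‖_∞, hence λ ≥ M^{-1/N}. -/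
open Set Filter Topology intervalIntegral

/-! By continuity the growth bound `|f s| ≤ M |s|^N` also holds at `s = 0`. Hence, for `‖v‖_∞ ≤ K`,
the inner integral of `T_f v` is at most `M K^N s^N ≤ M K^N`, so `|T_f v| ≤ M^{1/N} K` on `[0,1]`.
The fixed point equation then gives `‖v‖_∞ ≤ M^{1/N} λ ‖v‖_∞`, and dividing by `‖v‖_∞ > 0`
gives `λ ≥ M^{-1/N}`. -/

/-- The operator `T_f` of the fixed point equation `v = λ T_f v`. -/
noncomputable def radialOp (N : ℕ) (f v : ℝ → ℝ) (r : ℝ) : ℝ :=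
  ∫ s in r..1, (∫ τ in (0:ℝ)..s, (N:ℝ) * τ ^ (N - 1) * f (v τ)) ^ ((1:ℝ) / N)

lemma abs_le_mul_abs_pow_of_continuousAt {f : ℝ → ℝ} (hf : ContinuousAt f 0) {M : ℝ} {N : ℕ}
    (hbound : ∀ s, s ≠ 0 → |f s| ≤ M * |s| ^ N) (s : ℝ) : |f s| ≤ M * |s| ^ N := by
  rcases ne_or_eq s 0 with hs | rfl
  · exact hbound s hs
  · have hrhs : Continuous fun s : ℝ => M * |s| ^ N := by fun_prop
    exact le_of_tendsto_of_tendsto (b := 𝓝[≠] (0:ℝ))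
      (hf.abs.tendsto.mono_left nhdsWithin_le_nhds)
      ((hrhs.tendsto 0).mono_left nhdsWithin_le_nhds)
      (eventually_nhdsWithin_of_forall hbound)

lemma integral_natCast_mul_pow_sub_one {N : ℕ} (hN : 1 ≤ N) (s : ℝ) :
    ∫ τ in (0:ℝ)..s, (N:ℝ) * τ ^ (N - 1) = s ^ N := by
  obtain ⟨n, rfl⟩ := Nat.exists_eq_add_of_le' hN
  rw [integral_const_mul, integral_pow]
  push_cast
  field_simp
  simp

lemma abs_integral_weight_mul_le {N : ℕ} (hN : 1 ≤ N) {g : ℝ → ℝ} {C s : ℝ} (hs : 0 ≤ s)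
    (hg : ∀ τ ∈ Icc 0 s, |g τ| ≤ C) :
    |∫ τ in (0:ℝ)..s, (N:ℝ) * τ ^ (N - 1) * g τ| ≤ C * s ^ N := by
  have hC : 0 ≤ C := (abs_nonneg _).trans (hg 0 ⟨le_rfl, hs⟩)
  have hweight : ∀ τ ∈ uIoc 0 s, ‖(N:ℝ) * τ ^ (N - 1) * g τ‖ ≤ (N:ℝ) * τ ^ (N - 1) * C := by
    rw [uIoc_of_le hs]
    intro τ hτ
    have hτ0 : 0 ≤ τ := hτ.1.le
    rw [Real.norm_eq_abs, abs_mul, abs_of_nonneg (by positivity)]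
    exact mul_le_mul_of_nonneg_left (hg τ (Ioc_subset_Icc_self hτ)) (by positivity)
  have := norm_integral_le_abs_of_norm_le
    (MeasureTheory.ae_restrict_of_forall_mem measurableSet_uIoc hweight)
    ((by fun_prop : Continuous fun τ : ℝ => (N:ℝ) * τ ^ (N - 1) * C).intervalIntegrable
      (μ := MeasureTheory.volume) 0 s)
  rwa [integral_mul_const, integral_natCast_mul_pow_sub_one hN, mul_comm,
    abs_of_nonneg (by positivity)] at this

lemma abs_radialOp_le {N : ℕ} (hN : 1 ≤ N) {f v : ℝ → ℝ} {M K : ℝ} (hM : 0 ≤ M)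
    (hf : ∀ s, |f s| ≤ M * |s| ^ N) (hv : ∀ τ ∈ Icc (0:ℝ) 1, |v τ| ≤ K) {r : ℝ}
    (hr : r ∈ Icc (0:ℝ) 1) : |radialOp N f v r| ≤ M ^ ((1:ℝ) / N) * K := by
  have hK : 0 ≤ K := (abs_nonneg _).trans (hv 0 ⟨le_rfl, zero_le_one⟩)
  have hfv : ∀ τ ∈ Icc (0:ℝ) 1, |f (v τ)| ≤ M * K ^ N := fun τ hτ =>
    (hf _).trans (by gcongr; exact hv τ hτ)
  have hroot : (M * K ^ N) ^ ((1:ℝ) / N) = M ^ ((1:ℝ) / N) * K := by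
    rw [Real.mul_rpow hM (by positivity), one_div,
      Real.pow_rpow_inv_natCast hK (by omega)]
  have hintegrand : ∀ s ∈ uIoc r 1,
      ‖(∫ τ in (0:ℝ)..s, (N:ℝ) * τ ^ (N - 1) * f (v τ)) ^ ((1:ℝ) / N)‖ ≤ M ^ ((1:ℝ) / N) * K := by
    rw [uIoc_of_le hr.2]
    rintro s ⟨hrs, hs1⟩
    have hs0 : 0 ≤ s := hr.1.trans hrs.le
    have hinner : |∫ τ in (0:ℝ)..s, (N:ℝ) * τ ^ (N - 1) * f (v τ)| ≤ M * K ^ N :=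
      calc _ ≤ M * K ^ N * s ^ N := abs_integral_weight_mul_le hN hs0
              fun τ hτ => hfv τ ⟨hτ.1, hτ.2.trans hs1⟩
        _ ≤ M * K ^ N := mul_le_of_le_one_right (by positivity) (pow_le_one₀ hs0 hs1)
    calc _ ≤ |∫ τ in (0:ℝ)..s, (N:ℝ) * τ ^ (N - 1) * f (v τ)| ^ ((1:ℝ) / N) :=
          Real.abs_rpow_le_abs_rpow _ _
      _ ≤ (M * K ^ N) ^ ((1:ℝ) / N) := by gcongr
      _ = M ^ ((1:ℝ) / N) * K := hroot
  calc |radialOp N f v r| ≤ M ^ ((1:ℝ) / N) * K * |1 - r| :=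
        norm_integral_le_of_norm_le_const hintegrand
    _ ≤ M ^ ((1:ℝ) / N) * K := by
        refine mul_le_of_le_one_right (by positivity) ?_
        rw [abs_of_nonneg (by linarith [hr.2])]
        linarith [hr.1]

/-- Nonexistence of one-sign solutions for small `λ`: a nontrivial fixed point
`v = λ T_f v` with `|f(s)| ≤ M|s|^N` forces `‖v‖_∞ ≤ M^{1/N} λ ‖v‖_∞`, hence
`λ ≥ M^{-1/N}`. -/
theorem stmt_18 (N : ℕ) (hN : 1 ≤ N) (lam : ℝ) (hlam : 0 < lam)
    (f : ℝ → ℝ) (hf : Continuous f) (M : ℝ) (hM : 0 < M)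
    (hbound : ∀ s : ℝ, s ≠ 0 → |f s| ≤ M * |s| ^ N)
    (v : ℝ → ℝ) (hvc : ContinuousOn v (Icc (0:ℝ) 1))
    (hfix : ∀ r ∈ Icc (0:ℝ) 1,
      v r = lam * ∫ s in r..(1:ℝ),
        (∫ τ in (0:ℝ)..s, (N:ℝ) * τ ^ (N - 1) * f (v τ)) ^ ((1:ℝ) / N))
    (hnontriv : ∃ r ∈ Icc (0:ℝ) 1, v r ≠ 0) :
    sSup ((fun r => |v r|) '' Icc (0:ℝ) 1) ≤
        M ^ ((1:ℝ) / N) * lam * sSup ((fun r => |v r|) '' Icc (0:ℝ) 1) ∧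
      M ^ (-(1:ℝ) / N) ≤ lam := by
  set K := sSup ((fun r => |v r|) '' Icc (0:ℝ) 1)
  have hvK : ∀ r ∈ Icc (0:ℝ) 1, |v r| ≤ K := fun r hr =>
    le_csSup (isCompact_Icc.image_of_continuousOn hvc.abs).bddAbove (mem_image_of_mem _ hr)
  have hK : K ≤ M ^ ((1:ℝ) / N) * lam * K := by
    refine csSup_le ((nonempty_Icc.mpr zero_le_one).image _) ?_
    rintro _ ⟨r, hr, rfl⟩
    calc |v r| = lam * |radialOp N f v r| := by rw [hfix r hr, abs_mul, abs_of_pos hlam]; rfl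
      _ ≤ lam * (M ^ ((1:ℝ) / N) * K) := by
          gcongr
          exact abs_radialOp_le hN hM.le
            (abs_le_mul_abs_pow_of_continuousAt hf.continuousAt hbound) hvK hr
      _ = M ^ ((1:ℝ) / N) * lam * K := by ring
  refine ⟨hK, ?_⟩
  obtain ⟨r, hr, hvr⟩ := hnontriv
  have hKpos : 0 < K := (abs_pos.2 hvr).trans_le (hvK r hr)
  rw [neg_div, Real.rpow_neg hM.le, inv_le_iff_one_le_mul₀ (by positivity)]
  exact le_of_mul_le_mul_right (by rwa [one_mul, mul_comm lam]) hKpos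
end
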